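/- Let Ric be a symmetric bilinear form on an n-dimensional inner product space (n ≥ 3) with trace s > 0, and let R̄ = Ric - (s/n)g be its traceless part. Then (1/(n-1)) s ‖R̄‖² + (n/(n-2)) trace(R̄³) ≥ (1/(n-1)) ‖R̄‖² (s - √(n(n-1)) ‖R̄‖), where trace(R̄³) denotes the trace of the cube of the associated endomorphism. -/

import Mathlib

/-!
Okumura's inequality: if `∑ aᵢ = 0` and `∑ aᵢ² = n(n-1)c²` with `c ≥ 0`, then Cauchy–Schwarz on
the other `n - 1` entries gives `aᵢ ≥ -(n-1)c`, so `∑ (aᵢ - c)² (aᵢ + (n-1)c) ≥ 0`, which expands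
to `∑ aᵢ³ ≥ -(n-2) c ∑ aᵢ²`. Applied to the eigenvalues of the traceless part `R̄` this bounds
`trace(R̄³)` from below, and the estimate follows after the terms in `s` cancel.
-/

open Matrix Finset

section Okumura

variable {ι : Type*} [Fintype ι] {a : ι → ℝ}

theorem card_mul_sq_le_of_sum_eq_zero (ha : ∑ i, a i = 0) (i : ι) :
    Fintype.card ι * a i ^ 2 ≤ (Fintype.card ι - 1) * ∑ j, a j ^ 2 := by
  classical
  have hcs := sq_sum_le_card_mul_sum_sq (s := univ.erase i) (f := a)
  rw [sum_erase_eq_sub (mem_univ i), sum_erase_eq_sub (mem_univ i), ha,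
    card_erase_of_mem (mem_univ i), card_univ, Nat.cast_pred (Fintype.card_pos_iff.2 ⟨i⟩)] at hcs
  linarith

theorem neg_mul_le_sum_pow_three_of_sum_eq_zero (ha : ∑ i, a i = 0) {c : ℝ} (hc : 0 ≤ c)
    (hct : Fintype.card ι * (Fintype.card ι - 1) * c ^ 2 = ∑ i, a i ^ 2) :
    -((Fintype.card ι - 2) * c * ∑ i, a i ^ 2) ≤ ∑ i, a i ^ 3 := by
  set n : ℝ := (Fintype.card ι : ℝ)
  have hlow (i : ι) : -((n - 1) * c) ≤ a i := by
    have hn : 1 ≤ n := Nat.one_le_cast.2 (Fintype.card_pos_iff.2 ⟨i⟩)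
    have hsq : n * a i ^ 2 ≤ n * ((n - 1) * c) ^ 2 := by
      have := card_mul_sq_le_of_sum_eq_zero ha i
      rw [← hct] at this
      linarith
    exact (abs_le_of_sq_le_sq' (le_of_mul_le_mul_left hsq (by linarith))
      (mul_nonneg (by linarith) hc)).1
  have hsos : 0 ≤ ∑ i, (a i - c) ^ 2 * (a i + (n - 1) * c) :=
    sum_nonneg fun i _ => mul_nonneg (sq_nonneg _) (by linarith [hlow i])
  have hexpand : ∑ i, (a i - c) ^ 2 * (a i + (n - 1) * c)
      = ∑ i, a i ^ 3 + (n - 3) * c * ∑ i, a i ^ 2 - (2 * n - 3) * c ^ 2 * ∑ i, a i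
        + n * (n - 1) * c ^ 3 := by
    have hterm (x : ℝ) : (x - c) ^ 2 * (x + (n - 1) * c)
        = x ^ 3 + (n - 3) * c * x ^ 2 - (2 * n - 3) * c ^ 2 * x + (n - 1) * c ^ 3 := by ring
    simp only [hterm, sum_add_distrib, sum_sub_distrib, ← mul_sum, sum_const, card_univ,
      nsmul_eq_mul]
    ring
  rw [hexpand, ha, ← hct] at hsos
  rw [← hct]
  linarith

theorem okumura_inequality (hι : 2 ≤ Fintype.card ι) (ha : ∑ i, a i = 0) :
    -((Fintype.card ι - 2) * (∑ i, a i ^ 2) * √(∑ i, a i ^ 2))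
      ≤ √(Fintype.card ι * (Fintype.card ι - 1)) * ∑ i, a i ^ 3 := by
  have hn : (2 : ℝ) ≤ Fintype.card ι := by exact_mod_cast hι
  have hnn : (0 : ℝ) < Fintype.card ι * (Fintype.card ι - 1) := by nlinarith
  have hw : 0 < √(Fintype.card ι * (Fintype.card ι - 1) : ℝ) := Real.sqrt_pos.2 hnn
  have hc := neg_mul_le_sum_pow_three_of_sum_eq_zero ha
    (c := √(∑ i, a i ^ 2) / √(Fintype.card ι * (Fintype.card ι - 1))) (by positivity) (by
      rw [div_pow, Real.sq_sqrt (sum_nonneg fun i _ => sq_nonneg _), Real.sq_sqrt hnn.le]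
      exact mul_div_cancel₀ _ hnn.ne')
  calc _ = √(Fintype.card ι * (Fintype.card ι - 1)) * -((Fintype.card ι - 2) *
          (√(∑ i, a i ^ 2) / √(Fintype.card ι * (Fintype.card ι - 1))) * ∑ i, a i ^ 2) := by
        field_simp
    _ ≤ _ := mul_le_mul_of_nonneg_left hc hw.le

end Okumura

theorem Matrix.IsHermitian.trace_pow_eq_sum_eigenvalues_pow {𝕜 ι : Type*} [RCLike 𝕜] [Fintype ι]
    [DecidableEq ι] {A : Matrix ι ι 𝕜} (hA : A.IsHermitian) (k : ℕ) :
    (A ^ k).trace = ∑ i, (hA.eigenvalues i : 𝕜) ^ k := by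
  conv_lhs => rw [hA.spectral_theorem, ← map_pow]
  rw [diagonal_pow, Unitary.conjStarAlgAut_apply, trace_mul_cycle,
    Unitary.coe_star_mul_self, one_mul, trace_diagonal]
  rfl

theorem Matrix.okumura_inequality {ι : Type*} [Fintype ι] [DecidableEq ι]
    (hι : 2 ≤ Fintype.card ι) {A : Matrix ι ι ℝ} (hA : A.IsSymm) (h0 : A.trace = 0) :
    -((Fintype.card ι - 2) * (A ^ 2).trace * √((A ^ 2).trace))
      ≤ √(Fintype.card ι * (Fintype.card ι - 1)) * (A ^ 3).trace := by
  have hH : A.IsHermitian := isHermitian_iff_isSymm.2 hA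
  simp only [hH.trace_pow_eq_sum_eigenvalues_pow]
  refine _root_.okumura_inequality hι ?_
  simpa [hH.trace_eq_sum_eigenvalues] using h0

theorem traceless_ricci_cubic_estimate_general (n : ℕ) (hn : 3 ≤ n)
    (Ric : Matrix (Fin n) (Fin n) ℝ) (hRic : Ric.IsSymm) :
    (1 / ((n : ℝ) - 1)) * Ric.trace *
        (Real.sqrt (((Ric - (Ric.trace / n) • 1) * (Ric - (Ric.trace / n) • 1)).trace)) ^ 2
      + ((n : ℝ) / ((n : ℝ) - 2)) *
        ((Ric - (Ric.trace / n) • 1) * (Ric - (Ric.trace / n) • 1) *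
          (Ric - (Ric.trace / n) • 1)).trace
    ≥ (1 / ((n : ℝ) - 1)) *
        (Real.sqrt (((Ric - (Ric.trace / n) • 1) * (Ric - (Ric.trace / n) • 1)).trace)) ^ 2 *
        (Ric.trace - Real.sqrt ((n : ℝ) * ((n : ℝ) - 1)) *
          Real.sqrt (((Ric - (Ric.trace / n) • 1) * (Ric - (Ric.trace / n) • 1)).trace)) := by
  have hn' : (3 : ℝ) ≤ n := by exact_mod_cast hn
  set R := Ric - (Ric.trace / n) • 1
  have hR : R.IsSymm := hRic.sub (isSymm_one.smul _)
  have hR0 : R.trace = 0 := by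
    simp only [R, trace_sub, trace_smul, trace_one, Fintype.card_fin, smul_eq_mul]
    field_simp
    ring
  have hok := Matrix.okumura_inequality (by rw [Fintype.card_fin]; omega) hR hR0
  rw [Fintype.card_fin, sq, pow_three, ← Matrix.mul_assoc] at hok
  have ht : 0 ≤ (R * R).trace := by
    have := (posSemidef_conjTranspose_mul_self R).trace_nonneg
    rwa [conjTranspose_eq_transpose_of_trivial, hR.eq] at this
  have hw : √(n * (n - 1) : ℝ) ^ 2 = n * (n - 1) := Real.sq_sqrt (by nlinarith)
  rw [Real.sq_sqrt ht, ge_iff_le, ← sub_nonneg]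
  calc (0 : ℝ) ≤ √(n * (n - 1) : ℝ) * (√(n * (n - 1) : ℝ) * (R * R * R).trace
          + (n - 2) * (R * R).trace * √((R * R).trace)) / ((n - 1) * (n - 2)) :=
        div_nonneg (mul_nonneg (Real.sqrt_nonneg _) (by linarith)) (by nlinarith)
    _ = _ := by
        have hn1 : (n : ℝ) - 1 ≠ 0 := by linarith
        have hn2 : (n : ℝ) - 2 ≠ 0 := by linarith
        field_simp
        linear_combination (R * R * R).trace * hw

/-- pointwise linear-algebra inequality, estimate (3.7) of the paper.
`Ric` is a symmetric bilinear form on an `n`-dimensional inner product space (`n ≥ 3`),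
represented by a symmetric matrix in an orthonormal basis, with trace `s > 0`; `R̄ = Ric − (s/n)g`
is its traceless part. Then
`(1/(n-1)) s ‖R̄‖² + (n/(n-2)) trace(R̄³) ≥ (1/(n-1)) ‖R̄‖² (s − √(n(n-1)) ‖R̄‖)`. -/
theorem traceless_ricci_cubic_estimate (n : ℕ) (hn : 3 ≤ n)
    (Ric : Matrix (Fin n) (Fin n) ℝ) (hRic : Ric.IsSymm) (hs : 0 < Ric.trace) :
    (1 / ((n : ℝ) - 1)) * Ric.trace *
        (Real.sqrt (((Ric - (Ric.trace / n) • 1) * (Ric - (Ric.trace / n) • 1)).trace)) ^ 2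
      + ((n : ℝ) / ((n : ℝ) - 2)) *
        ((Ric - (Ric.trace / n) • 1) * (Ric - (Ric.trace / n) • 1) *
          (Ric - (Ric.trace / n) • 1)).trace
    ≥ (1 / ((n : ℝ) - 1)) *
        (Real.sqrt (((Ric - (Ric.trace / n) • 1) * (Ric - (Ric.trace / n) • 1)).trace)) ^ 2 *
        (Ric.trace - Real.sqrt ((n : ℝ) * ((n : ℝ) - 1)) *
          Real.sqrt (((Ric - (Ric.trace / n) • 1) * (Ric - (Ric.trace / n) • 1)).trace)) :=
  traceless_ricci_cubic_estimate_general n hn Ric hRic
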